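/- arXiv:1405.1812 — 2 statements merged into one kernel-verified Lean document; each statement's English description precedes it below -/
import Mathlib

section
/- For k ≥ 4 and n ≥ k+1, f(n,k) ≤ t(n,k) − 1, i.e., the Turán graph T(n,k−1) itself has a degree-monotone path on at least k+1 vertices. -/
/-!
A graph `G` with `mp G < k` is `K_k`-free, since a clique listed by increasing degree is a
degree-monotone path; so it has at most `t(n,k)` edges, and with exactly `t(n,k)` edges it would be
Turán-maximal, hence isomorphic to `T(n,k-1)` by Turán's theorem. But for `r = k - 1 ≥ 3` and
`n ≥ r + 2` the Turán graph `T(n,r)` (vertex `i` in part `i % r`) has only two vertex degrees: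
vertices in the larger parts, those with `i % r < n % r`, have the smaller degree. Visiting the
parts in increasing order of `i % r` gives a degree-monotone path on `r` vertices, and a second
vertex of equal degree can be slipped in: `0, 1, r, 2, …, r-1` works unless `n % r = 1`, and then
`0, 1, …, r-1, r+1` does.
-/

open SimpleGraph

/-- Degree of a vertex (as `ncard` of the neighbor set, avoiding decidability). -/
noncomputable def gdeg {V : Type*} (G : SimpleGraph V) (v : V) : ℕ := (G.neighborSet v).ncard

/-- A walk is degree-monotone if the degrees along its support are monotone. -/
def DegMonotone {V : Type*} (G : SimpleGraph V) {u v : V} (p : G.Walk u v) : Prop :=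
  List.Chain' (· ≤ ·) (p.support.map (gdeg G)) ∨
  List.Chain' (fun a b => b ≤ a) (p.support.map (gdeg G))

/-- `mp G`: the maximum number of vertices on a degree-monotone path of `G`. -/
noncomputable def mp {V : Type*} [Fintype V] (G : SimpleGraph V) : ℕ :=
  sSup {n | ∃ (u v : V) (p : G.Walk u v), p.IsPath ∧ DegMonotone G p ∧ p.support.length = n}

/-- The Turán number `t(n,k)`: the maximum number of edges of a `K_k`-free graph
on `n` vertices. -/
noncomputable def turanNum (n k : ℕ) : ℕ :=
  sSup {m | ∃ G : SimpleGraph (Fin n), G.CliqueFree k ∧ G.edgeSet.ncard = m}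

/-- `f(n,k)`: the maximum number of edges of a graph on `n` vertices with no
degree-monotone path on `k` vertices. -/
noncomputable def mpEx (n k : ℕ) : ℕ :=
  sSup {m | ∃ G : SimpleGraph (Fin n), mp G < k ∧ G.edgeSet.ncard = m}

section DegreeMonotonePaths

variable {V : Type*} [Fintype V] {G : SimpleGraph V}

lemma bddAbove_mp_set (G : SimpleGraph V) :
    BddAbove {m | ∃ (u v : V) (p : G.Walk u v),
      p.IsPath ∧ DegMonotone G p ∧ p.support.length = m} :=
  ⟨Fintype.card V, by
    rintro m ⟨u, v, p, hp, -, rfl⟩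
    exact hp.support_nodup.length_le_card⟩

lemma SimpleGraph.Walk.IsPath.length_support_le_mp {u v : V} {p : G.Walk u v} (hp : p.IsPath)
    (hd : DegMonotone G p) : p.support.length ≤ mp G :=
  le_csSup (bddAbove_mp_set G) ⟨u, v, p, hp, hd, rfl⟩

lemma length_le_mp_of_isChain {l : List V} (hl : l.Nodup)
    (hchain : l.IsChain fun a b => G.Adj a b ∧ gdeg G a ≤ gdeg G b) : l.length ≤ mp G := by
  rcases eq_or_ne l [] with rfl | hne
  · exact Nat.zero_le _
  have hadj : l.IsChain G.Adj := hchain.imp fun _ _ h => h.1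
  have hsupp := Walk.support_ofSupport hne hadj
  rw [← hsupp]
  refine Walk.IsPath.length_support_le_mp ?_ (Or.inl ?_)
  · rw [Walk.isPath_def, hsupp]
    exact hl
  · rw [hsupp]
    exact List.isChain_map _ |>.mpr <| hchain.imp fun _ _ h => h.2

lemma SimpleGraph.Iso.mp_le {W : Type*} [Fintype W] {H : SimpleGraph W} (e : G ≃g H) :
    mp G ≤ mp H := by
  refine csSup_le' ?_
  rintro m ⟨u, v, p, hp, hd, rfl⟩
  have hdeg : ∀ x, gdeg H (e x) = gdeg G x := fun x => by
    rw [gdeg, gdeg, ← Nat.card_coe_set_eq, ← Nat.card_coe_set_eq]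
    exact Nat.card_congr (e.mapNeighborSet x).symm
  have hmap : (p.map e.toHom).support.map (gdeg H) = p.support.map (gdeg G) := by
    rw [Walk.support_map, List.map_map]
    exact List.map_congr_left fun x _ => hdeg x
  have hpath : (p.map e.toHom).IsPath := hp.map e.injective
  simpa using hpath.length_support_le_mp (by rwa [DegMonotone, hmap])

lemma List.exists_perm_pairwise_comp_le {α β : Type*} [LinearOrder β] (f : α → β)
    (l : List α) : ∃ l' : List α, l'.Perm l ∧ l'.Pairwise fun a b => f a ≤ f b := by
  refine ⟨l.mergeSort fun a b => f a ≤ f b, l.mergeSort_perm _, ?_⟩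
  simpa using List.pairwise_mergeSort (le := fun a b => f a ≤ f b)
    (fun _ _ _ => by simpa using le_trans) (fun a b => by simpa using le_total _ _) l

lemma SimpleGraph.IsNClique.le_mp {k : ℕ} {s : Finset V} (hs : G.IsNClique k s) :
    k ≤ mp G := by
  obtain ⟨l, hperm, hsorted⟩ := s.toList.exists_perm_pairwise_comp_le (gdeg G)
  have hnodup : l.Nodup := hperm.nodup_iff.mpr s.nodup_toList
  have hadj : l.Pairwise G.Adj := hnodup.pairwise_of_set_pairwise <| by
    simpa [hperm.mem_iff] using hs.isClique
  have hlen : l.length = k := by rw [hperm.length_eq, Finset.length_toList, hs.card_eq]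
  exact hlen ▸ length_le_mp_of_isChain hnodup (hadj.and hsorted).isChain

lemma cliqueFree_of_mp_lt {k : ℕ} (h : mp G < k) : G.CliqueFree k :=
  fun _ hs => (hs.le_mp.trans_lt h).false

end DegreeMonotonePaths

section TuranGraph

variable {n r : ℕ}

/-- The degree of vertex `c` in `turanGraph n r`: `n` minus the size of its part. -/
def turanDegree (n r c : ℕ) : ℕ := n - (n / r + if c % r < n % r then 1 else 0)

lemma Fin.ncard_setOf_val_eq_count (n : ℕ) (p : ℕ → Prop) [DecidablePred p] :
    {w : Fin n | p w}.ncard = Nat.count p n := by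
  rw [Nat.count_eq_card_filter_range, Set.ncard_eq_toFinset_card', Finset.card_filter,
    Set.toFinset_ofPred, Finset.card_filter,
    Fin.sum_univ_eq_sum_range (fun i => if p i then 1 else 0)]

lemma gdeg_turanGraph (hr : 0 < r) (v : Fin n) :
    gdeg (turanGraph n r) v = turanDegree n r v := by
  classical
  have hnbr : (turanGraph n r).neighborSet v = {w : Fin n | (w : ℕ) ≡ v [MOD r]}ᶜ := by
    ext w
    simp [turanGraph_adj, Nat.ModEq, eq_comm]
  rw [gdeg, hnbr, Set.ncard_compl, Fin.ncard_setOf_val_eq_count n (· ≡ v [MOD r]),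
    Nat.count_modEq_card n hr, Nat.card_eq_fintype_card, Fintype.card_fin, turanDegree]

lemma turanDegree_le_of_mod_le {a b : ℕ} (h : a % r ≤ b % r) :
    turanDegree n r a ≤ turanDegree n r b := by
  unfold turanDegree
  split_ifs <;> omega

lemma turanDegree_eq_of_iff {a b : ℕ} (h : a % r < n % r ↔ b % r < n % r) :
    turanDegree n r a = turanDegree n r b := by
  simp only [turanDegree, h]

def TuranStep (n r a b : ℕ) : Prop := a % r ≠ b % r ∧ turanDegree n r a ≤ turanDegree n r b

lemma turanStep_of_lt {a b : ℕ} (hab : a < b) (hb : b < r) : TuranStep n r a b := by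
  have hmod : a % r = a ∧ b % r = b := ⟨Nat.mod_eq_of_lt (hab.trans hb), Nat.mod_eq_of_lt hb⟩
  exact ⟨by omega, turanDegree_le_of_mod_le (by omega)⟩

lemma isChain_turanStep_range' {s m : ℕ} (h : s + m ≤ r) :
    (List.range' s m).IsChain (TuranStep n r) := by
  rw [List.isChain_iff_getElem]
  intro i hi
  simp only [List.length_range', List.getElem_range'] at hi ⊢
  exact turanStep_of_lt (by omega) (by omega)

lemma length_le_mp_turanGraph (hr : 0 < r) {l : List ℕ} (hlt : ∀ x ∈ l, x < n) (hl : l.Nodup)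
    (hchain : l.IsChain (TuranStep n r)) : l.length ≤ mp (turanGraph n r) := by
  lift l to List (Fin n) using hlt
  rw [List.length_map]
  refine length_le_mp_of_isChain (hl.of_map _) <| ((List.isChain_map _).mp hchain).imp ?_
  rintro a b ⟨hmod, hdeg⟩
  exact ⟨turanGraph_adj.mpr hmod, by simpa only [gdeg_turanGraph hr] using hdeg⟩

lemma isChain_turanStep_of_mod_ne_one (hr : 3 ≤ r) (hn : n % r ≠ 1) :
    (0 :: 1 :: r :: List.range' 2 (r - 2)).IsChain (TuranStep n r) := by
  have h1 : 1 % r = 1 := Nat.mod_eq_of_lt (by omega)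
  have h2 : 2 % r = 2 := Nat.mod_eq_of_lt (by omega)
  have hdeg : turanDegree n r 0 = turanDegree n r 1 :=
    turanDegree_eq_of_iff (by rw [Nat.zero_mod, h1]; omega)
  have hdeg' : turanDegree n r r = turanDegree n r 0 :=
    turanDegree_eq_of_iff (by rw [Nat.mod_self, Nat.zero_mod])
  refine .cons_cons ⟨by simp [h1], hdeg.le⟩ <| .cons_cons ⟨by simp [h1], by rw [hdeg', hdeg]⟩ <|
    List.isChain_cons.mpr ⟨?_, isChain_turanStep_range' (by omega)⟩
  rw [List.head?_range', if_neg (by omega)]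
  rintro _ ⟨⟩
  exact ⟨by simp [h2], turanDegree_le_of_mod_le (by simp)⟩

lemma isChain_turanStep_of_mod_eq_one (hr : 3 ≤ r) (hn : n % r = 1) :
    (List.range' 0 r ++ [r + 1]).IsChain (TuranStep n r) := by
  refine List.isChain_append.mpr ⟨isChain_turanStep_range' (by omega), .singleton _, ?_⟩
  simp only [List.getLast?_range', if_neg (show r ≠ 0 by omega), List.head?_cons, Option.mem_def,
    Option.some.injEq]
  rintro _ rfl _ rfl
  have hlast : (0 + r - 1) % r = r - 1 := by rw [Nat.zero_add]; exact Nat.mod_eq_of_lt (by omega)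
  have hnext : (r + 1) % r = 1 := by rw [Nat.add_mod_left, Nat.mod_eq_of_lt (by omega)]
  refine ⟨?_, (turanDegree_eq_of_iff ?_).le⟩ <;> rw [hlast, hnext] <;> omega

lemma le_mp_turanGraph (hr : 3 ≤ r) (hn : r + 2 ≤ n) : r + 1 ≤ mp (turanGraph n r) := by
  by_cases hq : n % r = 1
  · simpa using length_le_mp_turanGraph (by omega) (fun x hx => by grind)
      (by grind [List.nodup_append, List.nodup_range']) (isChain_turanStep_of_mod_eq_one hr hq)
  · have := length_le_mp_turanGraph (by omega) (fun x hx => by grind)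
      (by grind [List.nodup_cons, List.nodup_range']) (isChain_turanStep_of_mod_ne_one hr hq)
    simp only [List.length_cons, List.length_range'] at this
    omega

end TuranGraph

lemma ncard_edgeSet_le_turanNum {n k : ℕ} {G : SimpleGraph (Fin n)} (hG : G.CliqueFree k) :
    G.edgeSet.ncard ≤ turanNum n k := by
  refine le_csSup ⟨(Set.univ : Set (Sym2 (Fin n))).ncard, ?_⟩ ⟨G, hG, rfl⟩
  rintro _ ⟨H, -, rfl⟩
  exact Set.ncard_le_ncard (Set.subset_univ _)

lemma isTuranMaximal_of_turanNum_le {n r : ℕ} {G : SimpleGraph (Fin n)} [DecidableRel G.Adj]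
    (hG : G.CliqueFree (r + 1)) (h : turanNum n (r + 1) ≤ G.edgeSet.ncard) :
    G.IsTuranMaximal r := by
  refine ⟨hG, fun H _ hH => ?_⟩
  simpa only [← coe_edgeFinset, Set.ncard_coe_finset] using (ncard_edgeSet_le_turanNum hH).trans h

lemma ncard_edgeSet_lt_turanNum_of_mp_lt {n k : ℕ} (hk : 4 ≤ k) (hn : k + 1 ≤ n)
    {G : SimpleGraph (Fin n)} (hG : mp G < k) : G.edgeSet.ncard < turanNum n k := by
  classical
  obtain ⟨r, rfl⟩ : ∃ r, k = r + 1 := ⟨k - 1, by omega⟩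
  have hcf : G.CliqueFree (r + 1) := cliqueFree_of_mp_lt hG
  refine (ncard_edgeSet_le_turanNum hcf).lt_of_ne fun heq => ?_
  obtain ⟨e⟩ := (isTuranMaximal_iff_nonempty_iso_turanGraph (by omega)).mp
    (isTuranMaximal_of_turanNum_le hcf heq.ge)
  have hpath : r + 1 ≤ mp (turanGraph (Fintype.card (Fin n)) r) :=
    le_mp_turanGraph (by omega) (by rw [Fintype.card_fin]; omega)
  exact (hpath.trans e.symm.mp_le).not_gt hG

/-- For `k ≥ 4` and `n ≥ k + 1`, `f(n,k) ≤ t(n,k) − 1`. -/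
theorem mpEx_le_turanNum_sub_one (n k : ℕ) (hk : 4 ≤ k) (hn : k + 1 ≤ n) :
    mpEx n k ≤ turanNum n k - 1 := by
  refine csSup_le' ?_
  rintro _ ⟨G, hG, rfl⟩
  exact Nat.le_sub_one_of_lt (ncard_edgeSet_lt_turanNum_of_mp_lt hk hn hG)
end

section
/- For every n ≥ 5 there exists a graph G on n vertices with mp(G) + mp(Ḡ) = 2n: take G to be a Hamiltonian cycle C_n; then Ḡ is (n−3)-regular with n−3 ≥ n/2, hence Hamiltonian by Dirac's theorem, so mp(G) = mp(Ḡ) = n. -/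
/-!
The cycle `C_n` is `2`-regular and its complement is `(n - 3)`-regular, so in both graphs every
path is degree-monotone and `mp` is the number of vertices of a longest path. `C_n` has the
Hamiltonian path `0, 1, …, n - 1`. For `n ≥ 5` its complement has the Hamiltonian path
`0, 2, 4, …, 1, 3, 5, …` (evens, then odds), which is the explicit witness replacing Dirac's theorem:
consecutive vertices differ by `2`, except at the junction, where they differ by at least `2` and
are not `{0, n - 1}`.
-/

open SimpleGraph

namespace SimpleGraph

variable {V : Type*} {G : SimpleGraph V}

theorem gdeg_eq_degree (G : SimpleGraph V) (v : V) [Fintype (G.neighborSet v)] :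
    gdeg G v = G.degree v := by
  rw [gdeg, Set.ncard_eq_toFinset_card', ← card_neighborSet_eq_degree, Set.toFinset_card]

theorem gdeg_compl [Fintype V] (G : SimpleGraph V) (v : V) :
    gdeg Gᶜ v = Fintype.card V - 1 - gdeg G v := by
  classical
  rw [gdeg_eq_degree, gdeg_eq_degree, degree_compl]

theorem degMonotone_of_forall_gdeg_eq {d : ℕ} (hG : ∀ v, gdeg G v = d) {u v : V}
    (p : G.Walk u v) : DegMonotone G p :=
  Or.inl <| (List.isChain_map _).mpr <|
    (List.pairwise_of_forall fun a b => ((hG a).trans (hG b).symm).le).isChain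

section mp

variable [Fintype V]

theorem le_mp {u v : V} {p : G.Walk u v} (hp : p.IsPath) (hmono : DegMonotone G p) :
    p.support.length ≤ mp G :=
  le_csSup ⟨Fintype.card V, by
    rintro _ ⟨_, _, q, hq, -, rfl⟩
    exact hq.support_nodup.length_le_card⟩ ⟨u, v, p, hp, hmono, rfl⟩

theorem mp_le_card [Nonempty V] : mp G ≤ Fintype.card V := by
  refine csSup_le ?_ ?_
  · obtain ⟨v⟩ := ‹Nonempty V›
    exact ⟨_, v, v, Walk.nil, Walk.IsPath.nil, Or.inl (List.isChain_singleton _), rfl⟩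
  · rintro _ ⟨_, _, q, hq, -, rfl⟩
    exact hq.support_nodup.length_le_card

theorem mp_eq_card_of_isHamiltonian [DecidableEq V] {u v : V} {p : G.Walk u v}
    (hp : p.IsHamiltonian) (hmono : DegMonotone G p) : mp G = Fintype.card V :=
  have : Nonempty V := ⟨u⟩
  mp_le_card.antisymm (hp.length_support ▸ le_mp hp.isPath hmono)

end mp

theorem exists_isHamiltonian_of_adj_succ [DecidableEq V] {n : ℕ} [NeZero n] (f : Fin n → V)
    (hf : f.Bijective)
    (hadj : ∀ (i : ℕ) (hi : i + 1 < n), G.Adj (f ⟨i, by omega⟩) (f ⟨i + 1, hi⟩)) :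
    ∃ (u v : V) (p : G.Walk u v), p.IsHamiltonian := by
  have hne : List.ofFn f ≠ [] := by simp [NeZero.ne n]
  let p := Walk.ofSupport _ hne (List.isChain_ofFn.mpr hadj)
  refine ⟨_, _, p, Walk.IsPath.isHamiltonian_of_mem ?_ fun w => ?_⟩
  · rw [Walk.isPath_def, Walk.support_ofSupport]
    exact List.nodup_ofFn.mpr hf.injective
  · rw [Walk.support_ofSupport]
    exact List.mem_ofFn.mpr (hf.surjective w)

theorem cycleGraph_adj_val {n : ℕ} {u v : Fin n} (h : (cycleGraph n).Adj u v) :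
    u.val + 1 = v.val ∨ v.val + 1 = u.val ∨ u.val + 1 = v.val + n ∨ v.val + 1 = u.val + n := by
  rcases cycleGraph_adj'.mp h with h | h
  · rcases le_or_gt v u with huv | huv
    · rw [Fin.coe_sub_iff_le.mpr huv] at h; omega
    · rw [Fin.coe_sub_iff_lt.mpr huv] at h; omega
  · rcases le_or_gt u v with huv | huv
    · rw [Fin.coe_sub_iff_le.mpr huv] at h; omega
    · rw [Fin.coe_sub_iff_lt.mpr huv] at h; omega

theorem gdeg_cycleGraph {n : ℕ} (v : Fin (n + 3)) : gdeg (cycleGraph (n + 3)) v = 2 := by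
  rw [gdeg_eq_degree, cycleGraph_degree_three_le]

theorem gdeg_compl_cycleGraph {n : ℕ} (v : Fin (n + 3)) : gdeg (cycleGraph (n + 3))ᶜ v = n := by
  rw [gdeg_compl, gdeg_cycleGraph, Fintype.card_fin]
  omega

theorem exists_isHamiltonian_cycleGraph (n : ℕ) :
    ∃ (u v : Fin (n + 1)) (p : (cycleGraph (n + 1)).Walk u v), p.IsHamiltonian :=
  exists_isHamiltonian_of_adj_succ id Function.bijective_id fun _ _ =>
    pathGraph_le_cycleGraph (pathGraph_adj.mpr (Or.inl rfl))

theorem exists_isHamiltonian_compl_cycleGraph (n : ℕ) :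
    ∃ (u v : Fin (n + 5)) (p : (cycleGraph (n + 5))ᶜ.Walk u v), p.IsHamiltonian := by
  let k := (n + 6) / 2
  let f : Fin (n + 5) → Fin (n + 5) := fun i =>
    ⟨if i.val < k then 2 * i.val else 2 * (i.val - k) + 1, by split_ifs <;> omega⟩
  have hf : f.Injective := by
    intro i j hij
    simp only [f, Fin.ext_iff] at hij ⊢
    split_ifs at hij <;> omega
  refine exists_isHamiltonian_of_adj_succ f
    ((Fintype.bijective_iff_injective_and_card f).mpr ⟨hf, rfl⟩) fun i hi => ?_
  refine (compl_adj _ _ _).mpr ⟨fun h => ?_, fun h => ?_⟩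
  · simp only [f, Fin.ext_iff] at h
    split_ifs at h <;> omega
  · have := cycleGraph_adj_val h
    simp only [f] at this
    split_ifs at this <;> omega

end SimpleGraph

/-- For every `n ≥ 5` there is a graph `G` on `n` vertices with
`mp(G) + mp(Ḡ) = 2n`; indeed one may take `G` to be a Hamiltonian cycle
(a connected `2`-regular graph). -/
theorem exists_mp_add_mp_compl_eq_two_n (n : ℕ) (hn : 5 ≤ n) :
    ∃ G : SimpleGraph (Fin n), G.Connected ∧ (∀ v, gdeg G v = 2) ∧
      mp G + mp Gᶜ = 2 * n := by
  obtain ⟨m, rfl⟩ := Nat.exists_eq_add_of_le' hn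
  refine ⟨cycleGraph (m + 5), cycleGraph_connected, gdeg_cycleGraph, ?_⟩
  obtain ⟨_, _, p, hp⟩ := exists_isHamiltonian_cycleGraph (m + 4)
  obtain ⟨_, _, q, hq⟩ := exists_isHamiltonian_compl_cycleGraph m
  rw [mp_eq_card_of_isHamiltonian hp (degMonotone_of_forall_gdeg_eq gdeg_cycleGraph p),
    mp_eq_card_of_isHamiltonian hq (degMonotone_of_forall_gdeg_eq gdeg_compl_cycleGraph q),
    Fintype.card_fin]
  ring
end
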